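/- Let F : ℝ^d → ℝ be twice differentiable with L₂-Lipschitz Hessian, let (Z, P_z) be a probability space, and let ĝ : ℝ^d × Z → ℝ^d satisfy: (i) E_{z∼P_z}[ĝ(x, z)] = ∇F(x) for all x ∈ ℝ^d, and (ii) the mean-squared smoothness property E_{z∼P_z}‖ĝ(x, z) − ĝ(y, z) − (∇F(x) − ∇F(y))‖² ≤ σ_mss²·‖x − y‖² for all x, y ∈ ℝ^d. Fix δ > 0, x ∈ ℝ^d and a unit vector u ∈ ℝ^d, and define the finite-difference Hessian-vector product estimator Ĥ_δ(x, z)u := (1/δ)·(ĝ(x + δ·u, z) − ĝ(x, z)). Then ‖E_{z∼P_z}[Ĥ_δ(x, z)u] − ∇²F(x)u‖ ≤ L₂δ/2 and E_{z∼P_z}‖Ĥ_δ(x, z)u − ∇²F(x)u‖² ≤ σ_mss² + L₂²δ²/4. -/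

import Mathlib

/-!
The mean of the finite-difference estimator is, by unbiasedness, the deterministic difference
quotient `(∇F(x + δu) - ∇F(x)) / δ`, which is within `L₂δ/2` of `∇²F(x)u` by the second-order
Taylor bound for a gradient with Lipschitz derivative. The second moment then splits, as for
any square-integrable random vector, into variance plus squared bias, and the variance is
`δ⁻²` times the mean-squared-smoothness integral at the pair `(x + δu, x)`, so at most
`σ_mss²`.
-/

open MeasureTheory
open scoped RealInnerProductSpace

section Taylor

variable {E F : Type*} [NormedAddCommGroup E] [NormedSpace ℝ E]
  [NormedAddCommGroup F] [NormedSpace ℝ F]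
  {g : E → F} {g' : E → E →L[ℝ] F} {L : ℝ}

theorem norm_sub_sub_fderiv_apply_le_of_lipschitz (hg : ∀ z, HasFDerivAt g (g' z) z)
    (hlip : ∀ z w, ‖g' z - g' w‖ ≤ L * ‖z - w‖) (p w : E) :
    ‖g (p + w) - g p - g' p w‖ ≤ L / 2 * ‖w‖ ^ 2 := by
  set φ : ℝ → F := fun t => g (p + t • w) - g p - t • g' p w
  have hφ : ∀ t : ℝ, HasDerivAt φ (g' (p + t • w) w - g' p w) t := by
    intro t
    have hline : HasDerivAt (fun t : ℝ => p + t • w) w t := by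
      simpa using ((hasDerivAt_id t).smul_const w).const_add p
    have hlin : HasDerivAt (fun t : ℝ => t • g' p w) (g' p w) t := by
      simpa using (hasDerivAt_id t).smul_const (g' p w)
    exact (((hg _).comp_hasDerivAt t hline).sub_const (g p)).sub hlin
  have hφ' : ∀ t ∈ Set.Ico (0 : ℝ) 1,
      ‖g' (p + t • w) w - g' p w‖ ≤ L * ‖w‖ ^ 2 / 2 * (2 * t) := by
    intro t ht
    calc ‖g' (p + t • w) w - g' p w‖ = ‖(g' (p + t • w) - g' p) w‖ := rfl
      _ ≤ ‖g' (p + t • w) - g' p‖ * ‖w‖ := (g' (p + t • w) - g' p).le_opNorm w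
      _ ≤ L * ‖t • w‖ * ‖w‖ := by
          gcongr
          simpa using hlip (p + t • w) p
      _ = L * ‖w‖ ^ 2 / 2 * (2 * t) := by
          rw [norm_smul, Real.norm_of_nonneg ht.1]; ring
  have hquad : ∀ t : ℝ,
      HasDerivAt (fun t => L * ‖w‖ ^ 2 / 2 * t ^ 2) (L * ‖w‖ ^ 2 / 2 * (2 * t)) t :=
    fun t => by simpa using (hasDerivAt_pow 2 t).const_mul (L * ‖w‖ ^ 2 / 2)
  have h1 := image_norm_le_of_norm_deriv_right_le_deriv_boundary
    (fun t _ => (hφ t).continuousAt.continuousWithinAt) (fun t _ => (hφ t).hasDerivWithinAt)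
    (by simp [φ]) hquad hφ' (Set.right_mem_Icc.2 zero_le_one)
  simp only [φ, one_smul, one_pow, mul_one] at h1
  linarith

theorem norm_smul_sub_sub_fderiv_apply_le_of_lipschitz (hg : ∀ z, HasFDerivAt g (g' z) z)
    (hlip : ∀ z w, ‖g' z - g' w‖ ≤ L * ‖z - w‖) (p u : E) {δ : ℝ} (hδ : 0 < δ) :
    ‖(1 / δ) • (g (p + δ • u) - g p) - g' p u‖ ≤ L / 2 * δ * ‖u‖ ^ 2 := by
  have hrw : (1 / δ) • (g (p + δ • u) - g p) - g' p u
      = (1 / δ) • (g (p + δ • u) - g p - g' p (δ • u)) := by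
    rw [map_smul, smul_sub _ _ (δ • _), smul_smul, one_div_mul_cancel hδ.ne', one_smul]
  calc ‖(1 / δ) • (g (p + δ • u) - g p) - g' p u‖
      = (1 / δ) * ‖g (p + δ • u) - g p - g' p (δ • u)‖ := by
        rw [hrw, norm_smul, Real.norm_of_nonneg (by positivity)]
    _ ≤ (1 / δ) * (L / 2 * ‖δ • u‖ ^ 2) := by
        gcongr
        exact norm_sub_sub_fderiv_apply_le_of_lipschitz hg hlip p (δ • u)
    _ = L / 2 * δ * ‖u‖ ^ 2 := by
        rw [norm_smul, Real.norm_of_nonneg hδ.le]; field_simp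

end Taylor

section BiasVariance

variable {Ω E : Type*} [MeasurableSpace Ω] {μ : Measure Ω} [IsProbabilityMeasure μ]
  [NormedAddCommGroup E] [InnerProductSpace ℝ E] [CompleteSpace E]

theorem integral_norm_sub_sq_eq_variance_add_bias {X : Ω → E} (hX : Integrable X μ)
    (hX2 : Integrable (fun ω => ‖X ω - ∫ ω', X ω' ∂μ‖ ^ 2) μ) (c : E) :
    ∫ ω, ‖X ω - c‖ ^ 2 ∂μ
      = ∫ ω, ‖X ω - ∫ ω', X ω' ∂μ‖ ^ 2 ∂μ + ‖(∫ ω, X ω ∂μ) - c‖ ^ 2 := by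
  set m := ∫ ω, X ω ∂μ
  have hcentered : Integrable (fun ω => X ω - m) μ := hX.sub (integrable_const m)
  have hcross : ∫ ω, ⟪m - c, X ω - m⟫ ∂μ = 0 := by
    rw [integral_inner hcentered, integral_sub hX (integrable_const m), integral_const]
    simp [m]
  have hsplit : ∀ ω,
      ‖X ω - c‖ ^ 2 = ‖X ω - m‖ ^ 2 + 2 * ⟪m - c, X ω - m⟫ + ‖m - c‖ ^ 2 := by
    intro ω
    rw [← sub_add_sub_cancel (X ω) m c, norm_add_sq_real, real_inner_comm (m - c)]
  have hcross_int : Integrable (fun ω => 2 * ⟪m - c, X ω - m⟫) μ :=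
    (hcentered.const_inner (m - c)).const_mul 2
  have hsum_int : Integrable (fun ω => ‖X ω - m‖ ^ 2 + 2 * ⟪m - c, X ω - m⟫) μ :=
    hX2.add hcross_int
  simp_rw [hsplit]
  rw [integral_add hsum_int (integrable_const _), integral_add hX2 hcross_int,
    integral_const_mul, hcross]
  simp

end BiasVariance

theorem stmt_6 {d : ℕ} {Z : Type*} [MeasurableSpace Z]
    (P : Measure Z) [IsProbabilityMeasure P]
    (gradF : EuclideanSpace ℝ (Fin d) → EuclideanSpace ℝ (Fin d))
    (hessF : EuclideanSpace ℝ (Fin d) →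
      EuclideanSpace ℝ (Fin d) →L[ℝ] EuclideanSpace ℝ (Fin d))
    (L₂ : ℝ)
    (hhess : ∀ z, HasFDerivAt gradF (hessF z) z)
    (hlip : ∀ z w, ‖hessF z - hessF w‖ ≤ L₂ * ‖z - w‖)
    (gEst : EuclideanSpace ℝ (Fin d) → Z → EuclideanSpace ℝ (Fin d))
    (σmss : ℝ)
    (hg_int : ∀ x, Integrable (gEst x) P)
    (hg_unbiased : ∀ x, ∫ z, gEst x z ∂P = gradF x)
    (hmss_int : ∀ x y,
      Integrable (fun z => ‖gEst x z - gEst y z - (gradF x - gradF y)‖ ^ 2) P)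
    (hmss : ∀ x y,
      ∫ z, ‖gEst x z - gEst y z - (gradF x - gradF y)‖ ^ 2 ∂P ≤ σmss ^ 2 * ‖x - y‖ ^ 2)
    (δ : ℝ) (hδ : 0 < δ)
    (x u : EuclideanSpace ℝ (Fin d)) (hu : ‖u‖ = 1) :
    ‖(∫ z, (1 / δ) • (gEst (x + δ • u) z - gEst x z) ∂P) - hessF x u‖ ≤ L₂ * δ / 2 ∧
    ∫ z, ‖(1 / δ) • (gEst (x + δ • u) z - gEst x z) - hessF x u‖ ^ 2 ∂P
      ≤ σmss ^ 2 + L₂ ^ 2 * δ ^ 2 / 4 := by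
  set y := x + δ • u with hy
  have hX : Integrable (fun z => (1 / δ) • (gEst y z - gEst x z)) P :=
    ((hg_int y).sub (hg_int x)).smul (1 / δ)
  have hmean : ∫ z, (1 / δ) • (gEst y z - gEst x z) ∂P = (1 / δ) • (gradF y - gradF x) := by
    rw [integral_smul, integral_sub (hg_int y) (hg_int x), hg_unbiased, hg_unbiased]
  have hbias : ‖(1 / δ) • (gradF y - gradF x) - hessF x u‖ ≤ L₂ * δ / 2 := by
    simpa [hu, mul_div_right_comm] using
      norm_smul_sub_sub_fderiv_apply_le_of_lipschitz hhess hlip x u hδ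
  have hcentered_sq : ∀ z,
      ‖(1 / δ) • (gEst y z - gEst x z) - (1 / δ) • (gradF y - gradF x)‖ ^ 2
        = (1 / δ) ^ 2 * ‖gEst y z - gEst x z - (gradF y - gradF x)‖ ^ 2 := by
    intro z
    rw [← smul_sub, norm_smul, mul_pow, Real.norm_eq_abs, sq_abs]
  have hvar :
      ∫ z, ‖(1 / δ) • (gEst y z - gEst x z) - (1 / δ) • (gradF y - gradF x)‖ ^ 2 ∂P
        ≤ σmss ^ 2 := by
    simp_rw [hcentered_sq]
    rw [integral_const_mul]
    calc _ ≤ (1 / δ) ^ 2 * (σmss ^ 2 * ‖y - x‖ ^ 2) := by gcongr; exact hmss y x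
      _ = σmss ^ 2 := by
          rw [hy, add_sub_cancel_left, norm_smul, hu, Real.norm_of_nonneg hδ.le]; field_simp
  refine ⟨hmean ▸ hbias, ?_⟩
  rw [integral_norm_sub_sq_eq_variance_add_bias hX ?_, hmean]
  · have hbias_sq := pow_le_pow_left₀ (norm_nonneg _) hbias 2
    linarith
  · simp_rw [hmean, hcentered_sq]
    exact (hmss_int y x).const_mul _
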